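/- Let r : ℤ → ℝ satisfy ∑_{k∈ℤ}(1+|k|)|r(k)| < ∞ and let f(ω) = (2π)^{-1}∑_{k∈ℤ} r(k)e^{-ιkω}. Then there exists a constant C > 0 such that for all n ≥ 1 and all ω₁, ω₂ ∈ ℝ, |∑_{t=1}^{n}∑_{s=1}^{n} r(t−s)·e^{-ι(tω₁ + sω₂)} − 2π·H_n^F(ω₁+ω₂)·f(ω₁)| ≤ C. (The double sum equals the joint cumulant cu(d_n(ω₁), d_n(ω₂)) of the discrete Fourier transforms d_n(ω) = ∑_{t=1}^{n} X_t e^{-ιtω} of a mean-zero stationary process with covariances r.) -/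

import Mathlib

/-!
Writing `t = s + k`, the double sum is
`∑ₛ (∑_{k=1-s}^{n-s} r(k) e^{-ιkω₁}) e^{-ιs(ω₁+ω₂)}`, while `2π H_n^F(ω₁+ω₂) f(ω₁)` is the
same expression with the inner sum running over all of `ℤ`. The error is therefore at most
`∑ₛ ∑_{k ∉ [1-s, n-s]} |r(k)|`, and a fixed lag `k` falls outside `[1-s, n-s]` for at most
`|k|` values of `s ∈ [1, n]`, so the error is at most `∑ₖ |k| |r(k)|`.
-/

open Complex Real

/-- The (complex form of the) spectral density `f(ω) = (2π)⁻¹ ∑_{k∈ℤ} r(k) e^{-ιkω}`. -/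
noncomputable def specDensityC (r : ℤ → ℝ) (ω : ℝ) : ℂ :=
  (2 * (Real.pi : ℂ))⁻¹ * ∑' k : ℤ, (r k : ℂ) * Complex.exp (-(Complex.I * (k : ℂ) * (ω : ℂ)))

/-- The Fejér spectral window `H_n^F(ω) = ∑_{t=1}^n e^{-ιtω}`. -/
noncomputable def fejerWindow (n : ℕ) (ω : ℝ) : ℂ :=
  ∑ t ∈ Finset.Icc 1 n, Complex.exp (-(Complex.I * (t : ℂ) * (ω : ℂ)))

open Finset

theorem Finset.sum_Icc_natCast_sub {M : Type*} [AddCommMonoid M] (h : ℤ → M) (n s : ℕ) :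
    ∑ t ∈ Icc 1 n, h (t - s) = ∑ k ∈ Icc (1 - (s : ℤ)) (n - s), h k := by
  refine sum_nbij' (fun t => t - s) (fun k => (k + s).toNat) ?_ ?_ ?_ ?_ fun _ _ => rfl <;>
    intro a ha <;> simp only [mem_Icc] at ha ⊢ <;> omega

theorem card_filter_notMem_Icc_sub_le (n : ℕ) (k : ℤ) :
    #((Icc 1 n).filter fun s : ℕ => k ∉ Icc (1 - (s : ℤ)) (n - s)) ≤ k.natAbs := by
  have hmem : ∀ s ∈ (Icc 1 n).filter fun s : ℕ => k ∉ Icc (1 - (s : ℤ)) (n - s),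
      1 ≤ s ∧ s ≤ n ∧ (s + k < 1 ∨ n < s + k) := by
    intro s hs
    simp only [mem_filter, mem_Icc] at hs
    omega
  -- the offending `s` lie in `(n - k, n]` if `k ≥ 0` and in `[1, -k]` if `k < 0`
  simpa only [card_range] using card_le_card_of_injOn (t := range k.natAbs)
    (fun s : ℕ => if 0 ≤ k then n - s else s - 1)
    (fun s hs => by
      have := hmem s hs; simp only [coe_range, Set.mem_Iio]; split <;> omega)
    (fun a ha b hb hab => by
      have := hmem a ha; have := hmem b hb; dsimp only at hab; split_ifs at hab <;> omega)

theorem sum_indicator_compl_Icc_sub_le (n : ℕ) {a : ℤ → ℝ} (ha : ∀ k, 0 ≤ a k) (k : ℤ) :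
    ∑ s ∈ Icc 1 n, (Icc (1 - (s : ℤ)) (n - s) : Set ℤ)ᶜ.indicator a k ≤ |(k : ℝ)| * a k := by
  rw [sum_indicator_eq_sum_filter, sum_const, nsmul_eq_mul]
  simp only [Set.mem_compl_iff, mem_coe]
  gcongr
  · exact ha k
  · calc (#((Icc 1 n).filter fun s : ℕ => k ∉ Icc (1 - (s : ℤ)) (n - s)) : ℝ) ≤ k.natAbs :=
          Nat.cast_le.mpr (card_filter_notMem_Icc_sub_le n k)
      _ = |(k : ℝ)| := by rw [Nat.cast_natAbs, Int.cast_abs]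

theorem norm_tsum_sub_sum_le {ι E : Type*} [NormedAddCommGroup E] [CompleteSpace E] {f : ι → E}
    (hf : Summable (‖f ·‖)) (A : Finset ι) :
    ‖∑' i, f i - ∑ i ∈ A, f i‖ ≤ ∑' i, (A : Set ι)ᶜ.indicator (‖f ·‖) i := by
  have hfs : Summable f := hf.of_norm
  have htail : ∑' i, f i - ∑ i ∈ A, f i = ∑' i, (A : Set ι)ᶜ.indicator f i := by
    rw [sum_eq_tsum_indicator, ← hfs.tsum_sub (hfs.indicator _), Set.indicator_compl]
    rfl
  rw [htail]
  refine (norm_tsum_le_tsum_norm ?_).trans_eq ?_ <;>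
    simp only [norm_indicator_eq_indicator_norm]
  exact hf.indicator _

theorem sum_norm_tsum_sub_sum_Icc_sub_le {E : Type*} [NormedAddCommGroup E] [CompleteSpace E]
    {f : ℤ → E} (hf : Summable (‖f ·‖)) (hf' : Summable fun k : ℤ => |(k : ℝ)| * ‖f k‖)
    (n : ℕ) :
    ∑ s ∈ Icc 1 n, ‖∑' k, f k - ∑ k ∈ Icc (1 - (s : ℤ)) (n - s), f k‖ ≤
      ∑' k : ℤ, |(k : ℝ)| * ‖f k‖ :=
  calc _ ≤ ∑ s ∈ Icc 1 n, ∑' k, (Icc (1 - (s : ℤ)) (n - s) : Set ℤ)ᶜ.indicator (‖f ·‖) k :=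
        sum_le_sum fun _ _ => norm_tsum_sub_sum_le hf _
    _ = ∑' k, ∑ s ∈ Icc 1 n, (Icc (1 - (s : ℤ)) (n - s) : Set ℤ)ᶜ.indicator (‖f ·‖) k :=
        (Summable.tsum_finsetSum fun _ _ => hf.indicator _).symm
    _ ≤ _ := Summable.tsum_le_tsum
        (sum_indicator_compl_Icc_sub_le n fun _ => norm_nonneg _)
        (summable_sum fun _ _ => hf.indicator _) hf'

theorem dft_double_sum_eq (r : ℤ → ℝ) (n : ℕ) (ω₁ ω₂ : ℝ) :
    ∑ t ∈ Icc 1 n, ∑ s ∈ Icc 1 n, (r (t - s) : ℂ) * cexp (-(I * (t * ω₁ + s * ω₂))) =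
      ∑ s ∈ Icc 1 n, (∑ k ∈ Icc (1 - (s : ℤ)) (n - s), (r k : ℂ) * cexp (-(I * k * ω₁))) *
        cexp (-(I * s * (ω₁ + ω₂))) := by
  rw [sum_comm]
  refine sum_congr rfl fun s _ => ?_
  rw [← sum_Icc_natCast_sub (fun k => (r k : ℂ) * cexp (-(I * k * ω₁))), sum_mul]
  refine sum_congr rfl fun t _ => ?_
  rw [mul_assoc, ← Complex.exp_add]
  push_cast
  ring_nf

theorem two_pi_mul_fejerWindow_mul_specDensityC (r : ℤ → ℝ) (n : ℕ) (ω₁ ω₂ : ℝ) :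
    2 * (π : ℂ) * fejerWindow n (ω₁ + ω₂) * specDensityC r ω₁ =
      ∑ s ∈ Icc 1 n, (∑' k : ℤ, (r k : ℂ) * cexp (-(I * k * ω₁))) *
        cexp (-(I * s * (ω₁ + ω₂))) := by
  have h2π : 2 * (π : ℂ) ≠ 0 := by simp [pi_ne_zero]
  rw [fejerWindow, specDensityC, ← mul_sum, ofReal_add, mul_comm (2 * (π : ℂ)), mul_assoc,
    mul_inv_cancel_left₀ h2π, mul_comm]

theorem dft_cumulant_approx_general (r : ℤ → ℝ)
    (hA1 : Summable fun k : ℤ => (1 + |(k : ℝ)|) * |r k|) :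
    ∃ C : ℝ, 0 < C ∧ ∀ n : ℕ, 1 ≤ n → ∀ ω₁ ω₂ : ℝ,
      ‖(∑ t ∈ Finset.Icc 1 n, ∑ s ∈ Finset.Icc 1 n,
            (r ((t : ℤ) - (s : ℤ)) : ℂ) *
              Complex.exp (-(Complex.I * ((t : ℂ) * (ω₁ : ℂ) + (s : ℂ) * (ω₂ : ℂ))))) -
          2 * (Real.pi : ℂ) * fejerWindow n (ω₁ + ω₂) * specDensityC r ω₁‖ ≤ C := by
  have hr : Summable fun k : ℤ => |r k| := hA1.of_nonneg_of_le (fun _ => abs_nonneg _)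
    fun _ => le_mul_of_one_le_left (abs_nonneg _) (le_add_of_nonneg_right (abs_nonneg _))
  have hkr : Summable fun k : ℤ => |(k : ℝ)| * |r k| := hA1.of_nonneg_of_le (fun _ => by positivity)
    fun _ => mul_le_mul_of_nonneg_right (le_add_of_nonneg_left zero_le_one) (abs_nonneg _)
  refine ⟨1 + ∑' k : ℤ, |(k : ℝ)| * |r k|, by positivity, fun n _ ω₁ ω₂ => ?_⟩
  rw [dft_double_sum_eq, two_pi_mul_fejerWindow_mul_specDensityC, ← sum_sub_distrib]
  set g : ℤ → ℂ := fun k => r k * cexp (-(I * k * ω₁))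
  have hg : ∀ k, ‖g k‖ = |r k| := fun k => by simp [g, norm_exp]
  calc _ ≤ ∑ s ∈ Icc 1 n, ‖∑' k, g k - ∑ k ∈ Icc (1 - (s : ℤ)) (n - s), g k‖ :=
        norm_sum_le_of_le _ fun _ _ => by
          rw [← sub_mul, norm_mul, norm_sub_rev]; simp [norm_exp]
    _ ≤ ∑' k : ℤ, |(k : ℝ)| * ‖g k‖ := sum_norm_tsum_sub_sum_Icc_sub_le
        (by simpa only [hg] using hr) (by simpa only [hg] using hkr) n
    _ ≤ _ := by simp only [hg, le_add_iff_nonneg_left, zero_le_one]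

/-- under A.1, the joint cumulant
`cu(d_n(ω₁), d_n(ω₂)) = ∑_{t,s=1}^n r(t-s) e^{-ι(tω₁ + sω₂)}` of discrete Fourier transforms
equals `2π H_n^F(ω₁+ω₂) f(ω₁)` up to an error bounded by a constant `C`, uniformly in
`n ≥ 1` and `ω₁, ω₂ ∈ ℝ`. -/
theorem dft_cumulant_approx (r : ℤ → ℝ) (heven : ∀ k : ℤ, r (-k) = r k)
    (hA1 : Summable fun k : ℤ => (1 + |(k : ℝ)|) * |r k|) :
    ∃ C : ℝ, 0 < C ∧ ∀ n : ℕ, 1 ≤ n → ∀ ω₁ ω₂ : ℝ,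
      ‖(∑ t ∈ Finset.Icc 1 n, ∑ s ∈ Finset.Icc 1 n,
            (r ((t : ℤ) - (s : ℤ)) : ℂ) *
              Complex.exp (-(Complex.I * ((t : ℂ) * (ω₁ : ℂ) + (s : ℂ) * (ω₂ : ℂ))))) -
          2 * (Real.pi : ℂ) * fejerWindow n (ω₁ + ω₂) * specDensityC r ω₁‖ ≤ C :=
  dft_cumulant_approx_general r hA1
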